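/- arXiv:2006.04787 — 6 statements merged into one kernel-verified Lean document; each statement's English description precedes it below -/
import Mathlib

section
/- Let D be a joint distribution of (X,Y) with X valued in the unit ball of ℝ^d and Y valued in {−1,+1}, arising from an η-Massart halfspace with true unit-norm halfspace w* and margin γ > 0 (so |⟨w*,X⟩| ≥ γ almost surely). Then for every λ ≥ η, the LeakyRelu loss satisfies L_λ(w*) = E[LeakyRelu_λ(−Y⟨w*,X⟩)] ≤ −γ·(λ − err(w*)), where err(w*) = Pr[sgn(⟨w*,X⟩) ≠ Y]. -/
/-!
Where `Y = ±1`, `LeakyRelu_λ(-Y⟨w*, X⟩) = |⟨w*, X⟩| (𝟙[sgn⟨w*, X⟩ ≠ Y] - λ)`. The factor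
`|⟨w*, X⟩|` is a function of `X`, so conditioning on `X` replaces the indicator by `η(X) ≤ λ`;
the margin then bounds `|⟨w*, X⟩| (η(X) - λ)` by `γ (η(X) - λ)`, whose expectation is
`γ (err(w*) - λ)`.
-/

open MeasureTheory
open scoped RealInnerProductSpace

/-- The LeakyRelu function with leakage parameter `l`. -/
noncomputable def leakyRelu (l z : ℝ) : ℝ := if 0 ≤ z then (1 - l) * z else l * z

theorem Real.monotone_sign : Monotone Real.sign := by
  intro a b hab
  simp only [Real.sign]
  split_ifs <;> linarith

theorem leakyRelu_neg_mul_eq {y : ℝ} (hy : y = 1 ∨ y = -1) (l z : ℝ) :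
    leakyRelu l (-y * z) = |z| * ((if Real.sign z ≠ y then 1 else 0) - l) := by
  rcases lt_trichotomy z 0 with hz | rfl | hz
  · rw [Real.sign_of_neg hz, abs_of_neg hz]
    rcases hy with rfl | rfl
    · rw [leakyRelu, if_pos (by linarith), if_pos (by norm_num)]; ring
    · rw [leakyRelu, if_neg (by linarith), if_neg (by norm_num)]; ring
  · simp [leakyRelu]
  · rw [Real.sign_of_pos hz, abs_of_pos hz]
    rcases hy with rfl | rfl
    · rw [leakyRelu, if_neg (by linarith), if_neg (by norm_num)]; ring
    · rw [leakyRelu, if_pos (by linarith), if_pos (by norm_num)]; ring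

section CondExp

variable {Ω : Type*} {m m₀ : MeasurableSpace Ω} {μ : Measure Ω}

theorem integral_mul_eq_of_condExp_eq (hm : m ≤ m₀) [SigmaFinite (μ.trim hm)] {A g e : Ω → ℝ}
    (hA : StronglyMeasurable[m] A) (hAg : Integrable (A * g) μ) (hg : Integrable g μ)
    (hge : μ[g|m] =ᵐ[μ] e) : ∫ ω, A ω * g ω ∂μ = ∫ ω, A ω * e ω ∂μ := by
  refine (integral_condExp (f := A * g) hm).symm.trans (integral_congr_ae ?_)
  filter_upwards [condExp_mul_of_stronglyMeasurable_left hA hAg hg, hge] with ω hAg hω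
  rw [hAg, Pi.mul_apply, hω]

theorem integral_mul_sub_le_of_condExp_le [IsProbabilityMeasure μ] (hm : m ≤ m₀)
    {A g e : Ω → ℝ} {C γ c : ℝ} (hA : StronglyMeasurable[m] A) (hAC : ∀ᵐ ω ∂μ, |A ω| ≤ C)
    (hγA : ∀ᵐ ω ∂μ, γ ≤ A ω) (hg : Integrable g μ) (hge : μ[g|m] =ᵐ[μ] e)
    (hec : ∀ᵐ ω ∂μ, e ω ≤ c) :
    ∫ ω, A ω * (g ω - c) ∂μ ≤ γ * (∫ ω, g ω ∂μ - c) := by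
  have hA' : AEStronglyMeasurable A μ := (hA.mono hm).aestronglyMeasurable
  have hAC' : ∀ᵐ ω ∂μ, ‖A ω‖ ≤ C := by simpa using hAC
  have hAint : Integrable A μ := (integrable_const C).mono' hA' hAC'
  have he : Integrable e μ := integrable_condExp.congr hge
  have hAg : Integrable (fun ω => A ω * g ω) μ := hg.bdd_mul hA' hAC'
  have hAe : Integrable (fun ω => A ω * e ω) μ := he.bdd_mul hA' hAC'
  calc ∫ ω, A ω * (g ω - c) ∂μ = ∫ ω, A ω * g ω ∂μ - c * ∫ ω, A ω ∂μ := by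
        simp_rw [mul_sub, integral_sub hAg (hAint.mul_const c), integral_mul_const, mul_comm]
    _ = ∫ ω, A ω * (e ω - c) ∂μ := by
        simp_rw [integral_mul_eq_of_condExp_eq hm hA hAg hg hge, mul_sub,
          integral_sub hAe (hAint.mul_const c), integral_mul_const, mul_comm]
    _ ≤ ∫ ω, γ * (e ω - c) ∂μ := by
        refine integral_mono_ae ((he.sub (integrable_const c)).bdd_mul hA' hAC')
          ((he.sub (integrable_const c)).const_mul γ) ?_
        filter_upwards [hγA, hec] with ω hγ hc
        exact mul_le_mul_of_nonpos_right hγ (sub_nonpos.2 hc)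
    _ = γ * (∫ ω, g ω ∂μ - c) := by
        rw [integral_const_mul, integral_sub he (integrable_const c), integral_const,
          ← integral_congr_ae hge, integral_condExp hm]
        simp

end CondExp

theorem massart_wstar_leakyRelu_bound_general
    {d : ℕ} {Ω : Type*} [MeasurableSpace Ω] (μ : Measure Ω) [IsProbabilityMeasure μ]
    (X : Ω → EuclideanSpace ℝ (Fin d)) (Y : Ω → ℝ)
    (hX : Measurable X) (hY : Measurable Y)
    (hXball : ∀ᵐ ω ∂μ, ‖X ω‖ ≤ 1)
    (hYpm : ∀ᵐ ω ∂μ, Y ω = 1 ∨ Y ω = -1)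
    (wstar : EuclideanSpace ℝ (Fin d))
    (γ : ℝ)
    (hmargin : ∀ᵐ ω ∂μ, γ ≤ |⟪wstar, X ω⟫|)
    (η : ℝ)
    (ηf : EuclideanSpace ℝ (Fin d) → ℝ)
    (hηf_bounds : ∀ x, 0 ≤ ηf x ∧ ηf x ≤ η)
    (hMassart : MeasureTheory.condExp (MeasurableSpace.comap X inferInstance) μ
        (fun ω => if Real.sign ⟪wstar, X ω⟫ ≠ Y ω then (1:ℝ) else 0)
      =ᵐ[μ] fun ω => ηf (X ω))
    (lam : ℝ) (hlam : η ≤ lam) :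
    ∫ ω, leakyRelu lam (-(Y ω) * ⟪wstar, X ω⟫) ∂μ ≤
      -γ * (lam - (μ {ω | Real.sign ⟪wstar, X ω⟫ ≠ Y ω}).toReal) := by
  set s := {ω | Real.sign ⟪wstar, X ω⟫ ≠ Y ω}
  have hs : MeasurableSet s := (measurableSet_eq_fun
    (Real.monotone_sign.measurable.comp (measurable_const.inner hX)) hY).compl
  have hmis : (fun ω => if Real.sign ⟪wstar, X ω⟫ ≠ Y ω then (1:ℝ) else 0) = s.indicator 1 := by
    ext ω
    simp [s, Set.indicator_apply]
  have hA : StronglyMeasurable[MeasurableSpace.comap X inferInstance] fun ω => |⟪wstar, X ω⟫| :=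
    ((measurable_const.inner measurable_id).abs.comp (comap_measurable X)).stronglyMeasurable
  have hAC : ∀ᵐ ω ∂μ, |(|⟪wstar, X ω⟫|)| ≤ ‖wstar‖ := by
    filter_upwards [hXball] with ω hω
    simpa using (abs_real_inner_le_norm _ _).trans (mul_le_of_le_one_right (norm_nonneg _) hω)
  rw [hmis] at hMassart
  calc ∫ ω, leakyRelu lam (-(Y ω) * ⟪wstar, X ω⟫) ∂μ
      = ∫ ω, |⟪wstar, X ω⟫| * (s.indicator 1 ω - lam) ∂μ := by
        refine integral_congr_ae ?_
        filter_upwards [hYpm] with ω hω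
        rw [leakyRelu_neg_mul_eq hω, ← congr_fun hmis]
    _ ≤ γ * (∫ ω, s.indicator 1 ω ∂μ - lam) :=
        integral_mul_sub_le_of_condExp_le hX.comap_le hA hAC hmargin
          ((integrable_const 1).indicator hs) hMassart
          (.of_forall fun ω => (hηf_bounds (X ω)).2.trans hlam)
    _ = -γ * (lam - (μ s).toReal) := by
        rw [integral_indicator_one hs, Measure.real]
        ring

/-- **Lemma (Lemma 2.3 of DGT / Lemma `wstar-massart`).**
If `(X, Y)` follows an `η`-Massart halfspace model with unit-norm true halfspace `w*` and
margin `γ > 0`, then for any `λ ≥ η`, the LeakyRelu loss of `w*` satisfies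
`L_λ(w*) ≤ -γ (λ - err(w*))`. The Massart condition is encoded by requiring that the
conditional expectation of the misclassification indicator given `X` is `ηf (X ·)` with
`0 ≤ ηf ≤ η`. -/
theorem massart_wstar_leakyRelu_bound
    {d : ℕ} {Ω : Type*} [MeasurableSpace Ω] (μ : Measure Ω) [IsProbabilityMeasure μ]
    (X : Ω → EuclideanSpace ℝ (Fin d)) (Y : Ω → ℝ)
    (hX : Measurable X) (hY : Measurable Y)
    (hXball : ∀ᵐ ω ∂μ, ‖X ω‖ ≤ 1)
    (hYpm : ∀ᵐ ω ∂μ, Y ω = 1 ∨ Y ω = -1)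
    (wstar : EuclideanSpace ℝ (Fin d)) (hwstar : ‖wstar‖ = 1)
    (γ : ℝ) (hγ : 0 < γ)
    (hmargin : ∀ᵐ ω ∂μ, γ ≤ |⟪wstar, X ω⟫|)
    (η : ℝ) (hη0 : 0 ≤ η) (hη : η < 1/2)
    (ηf : EuclideanSpace ℝ (Fin d) → ℝ) (hηf_meas : Measurable ηf)
    (hηf_bounds : ∀ x, 0 ≤ ηf x ∧ ηf x ≤ η)
    (hMassart : MeasureTheory.condExp (MeasurableSpace.comap X inferInstance) μ
        (fun ω => if Real.sign ⟪wstar, X ω⟫ ≠ Y ω then (1:ℝ) else 0)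
      =ᵐ[μ] fun ω => ηf (X ω))
    (lam : ℝ) (hlam : η ≤ lam) :
    ∫ ω, leakyRelu lam (-(Y ω) * ⟪wstar, X ω⟫) ∂μ ≤
      -γ * (lam - (μ {ω | Real.sign ⟪wstar, X ω⟫ ≠ Y ω}).toReal) :=
  massart_wstar_leakyRelu_bound_general μ X Y hX hY hXball hYpm wstar γ hmargin η ηf hηf_bounds
    hMassart lam hlam
end

section
/- Let D be a joint distribution of (X,Y) with ‖X‖ ≤ 1 almost surely and Y valued in {−1,+1}. Let w ∈ ℝ^d with ‖w‖ ≤ 1 and λ ∈ (0,1/2] be such that L_λ(w) = E[LeakyRelu_λ(−Y⟨w,X⟩)] < 0. Then there exists a threshold τ ≥ 0 such that: (1) Pr[|⟨w,X⟩| ≥ τ] ≥ |L_λ(w)|/(2λ), and (2) Pr[sgn(⟨w,X⟩) ≠ Y | |⟨w,X⟩| ≥ τ] ≤ λ. -/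
open MeasureTheory
open scoped RealInnerProductSpace

/-!
With `m = ⟪w, X⟫ ∈ [-1, 1]`, the loss is `E[(1{Y m < 0} - λ) |m|]`. By the layer-cake formula
this is the average over `τ ∈ (0, 1]` of `Pr[Y m < 0, |m| ≥ τ] - λ Pr[|m| ≥ τ]`, so some `τ` does
at least as well as the average. The resulting inequality `Pr[Y m < 0, A_τ] - λ Pr[A_τ] ≤ L < 0`
gives both `λ Pr[A_τ] ≥ |L|` and `Pr[Y m < 0 | A_τ] ≤ λ`; on `A_τ` we have `m ≠ 0`, where a sign
mistake is exactly `Y m < 0`.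
-/

open Set

theorem leakyRelu_neg (l z : ℝ) :
    leakyRelu l (-z) = (if z < 0 then |z| else 0) - l * |z| := by
  unfold leakyRelu
  rcases lt_trichotomy z 0 with h | rfl | h
  · rw [if_pos (by linarith), if_pos h, abs_of_neg h]; ring
  · simp
  · rw [if_neg (by linarith), if_neg h.not_gt, abs_of_pos h]; ring

theorem leakyRelu_neg_mul_of_abs_eq_one (l : ℝ) {y : ℝ} (hy : |y| = 1) (m : ℝ) :
    leakyRelu l (-y * m) = (if y * m < 0 then |m| else 0) - l * |m| := by
  rw [neg_mul, leakyRelu_neg, abs_mul, hy, one_mul]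

theorem Real.sign_ne_iff_mul_neg {y m : ℝ} (hy : y = 1 ∨ y = -1) (hm : m ≠ 0) :
    Real.sign m ≠ y ↔ y * m < 0 := by
  rcases hy with rfl | rfl <;> rcases hm.lt_or_gt with h | h <;>
    simp [Real.sign_of_neg, Real.sign_of_pos, h, h.not_gt] <;> norm_num

theorem exists_mem_Ioc_le_integral_Ioc {g : ℝ → ℝ} (hg : IntegrableOn g (Ioc 0 1)) :
    ∃ t ∈ Ioc (0 : ℝ) 1, g t ≤ ∫ t in Ioc 0 1, g t := by
  have hvol : volume (Ioc (0 : ℝ) 1) = 1 := by simp [Real.volume_Ioc]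
  simpa [setAverage_eq, measureReal_def, hvol] using
    exists_le_setAverage (by simp [hvol]) (by simp [hvol]) hg

section LayerCake

variable {α : Type*} [MeasurableSpace α] {μ : Measure α} [IsFiniteMeasure μ] {f : α → ℝ}

variable (μ f) in
theorem antitone_measureReal_setOf_le :
    Antitone fun t => μ.real {a | t ≤ f a} :=
  fun _ _ hst => measureReal_mono fun _ ha => hst.trans ha

variable (μ f) in
theorem integrableOn_Ioc_measureReal_setOf_le (M : ℝ) : IntegrableOn (fun t => μ.real {a | t ≤ f a}) (Ioc 0 M) :=
  ((antitone_measureReal_setOf_le μ f).antitoneOn _).integrableOn_isCompact isCompact_Icc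
    |>.mono_set Ioc_subset_Icc_self

theorem integral_indicator_sub_mul_eq_integral_Ioc {E : Set α} {M : ℝ} (hE : MeasurableSet E)
    (hf : Measurable f) (hf0 : 0 ≤ᵐ[μ] f) (hfM : f ≤ᵐ[μ] fun _ => M) (l : ℝ) :
    ∫ a, (E.indicator f a - l * f a) ∂μ =
      ∫ t in Ioc 0 M, (μ.real ({a | t ≤ f a} ∩ E) - l * μ.real {a | t ≤ f a}) := by
  have hfi : Integrable f μ := by
    refine .of_bound hf.aestronglyMeasurable M ?_
    filter_upwards [hf0, hfM] with a h0 hM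
    rwa [Real.norm_of_nonneg h0]
  simp only [← measureReal_restrict_apply (measurableSet_le measurable_const hf)]
  rw [integral_sub (hfi.indicator hE) (hfi.const_mul l), integral_indicator hE,
    integral_const_mul, hfi.restrict.integral_eq_integral_Ioc_meas_le (ae_restrict_of_ae hf0)
      (ae_restrict_of_ae hfM), hfi.integral_eq_integral_Ioc_meas_le hf0 hfM,
    integral_sub (integrableOn_Ioc_measureReal_setOf_le _ f M)
      ((integrableOn_Ioc_measureReal_setOf_le μ f M).const_mul l), integral_const_mul]

theorem exists_threshold_le_integral_indicator_sub_mul {E : Set α} (hE : MeasurableSet E)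
    (hf : Measurable f) (hf0 : 0 ≤ᵐ[μ] f) (hf1 : f ≤ᵐ[μ] fun _ => 1) (l : ℝ) :
    ∃ t ∈ Ioc (0 : ℝ) 1, μ.real ({a | t ≤ f a} ∩ E) - l * μ.real {a | t ≤ f a} ≤
      ∫ a, (E.indicator f a - l * f a) ∂μ := by
  rw [integral_indicator_sub_mul_eq_integral_Ioc hE hf hf0 hf1]
  refine exists_mem_Ioc_le_integral_Ioc
    (.sub ?_ ((integrableOn_Ioc_measureReal_setOf_le μ f 1).const_mul l))
  simpa only [← measureReal_restrict_apply (measurableSet_le measurable_const hf)] using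
    integrableOn_Ioc_measureReal_setOf_le (μ.restrict E) f 1

end LayerCake

theorem ProbabilityTheory.cond_toReal_le {Ω : Type*} [MeasurableSpace Ω] {μ : Measure Ω}
    [IsFiniteMeasure μ] {A S : Set Ω} {l : ℝ} (hA : MeasurableSet A) (hl : 0 ≤ l)
    (h : μ.real (A ∩ S) ≤ l * μ.real A) : (ProbabilityTheory.cond μ A S).toReal ≤ l := by
  rw [ProbabilityTheory.cond_apply hA, ENNReal.toReal_mul, ENNReal.toReal_inv,
    ← measureReal_def, ← measureReal_def]
  rcases (measureReal_nonneg : 0 ≤ μ.real A).eq_or_lt with hA0 | hApos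
  · rw [← hA0, inv_zero, zero_mul]; exact hl
  · rwa [inv_mul_le_iff₀ hApos, mul_comm]

theorem rounding_lemma_general
    {d : ℕ} {Ω : Type*} [MeasurableSpace Ω] (μ : Measure Ω) [IsProbabilityMeasure μ]
    (X : Ω → EuclideanSpace ℝ (Fin d)) (Y : Ω → ℝ)
    (hX : Measurable X) (hY : Measurable Y)
    (hXball : ∀ᵐ ω ∂μ, ‖X ω‖ ≤ 1)
    (hYpm : ∀ᵐ ω ∂μ, Y ω = 1 ∨ Y ω = -1)
    (w : EuclideanSpace ℝ (Fin d)) (hw : ‖w‖ ≤ 1)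
    (lam : ℝ) (hlam0 : 0 < lam)
    (hL : ∫ ω, leakyRelu lam (-(Y ω) * ⟪w, X ω⟫) ∂μ < 0) :
    ∃ τ : ℝ, 0 ≤ τ ∧
      |∫ ω, leakyRelu lam (-(Y ω) * ⟪w, X ω⟫) ∂μ| / (2 * lam) ≤
        (μ {ω | τ ≤ |⟪w, X ω⟫|}).toReal ∧
      (ProbabilityTheory.cond μ {ω | τ ≤ |⟪w, X ω⟫|}
        {ω | Real.sign ⟪w, X ω⟫ ≠ Y ω}).toReal ≤ lam := by
  set L := ∫ ω, leakyRelu lam (-(Y ω) * ⟪w, X ω⟫) ∂μ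
  set m : Ω → ℝ := fun ω => ⟪w, X ω⟫
  have hm : Measurable m := measurable_const.inner hX
  have hm1 : ∀ᵐ ω ∂μ, |m ω| ≤ 1 := by
    filter_upwards [hXball] with ω hω
    exact (abs_real_inner_le_norm w (X ω)).trans (mul_le_one₀ hw (norm_nonneg _) hω)
  set E := {ω | Y ω * m ω < 0}
  have hE : MeasurableSet E := measurableSet_lt (hY.mul hm) measurable_const
  have hL_eq : L = ∫ ω, (E.indicator (fun ω => |m ω|) ω - lam * |m ω|) ∂μ := by
    refine integral_congr_ae ?_
    filter_upwards [hYpm] with ω hy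
    exact leakyRelu_neg_mul_of_abs_eq_one lam (by rcases hy with h | h <;> simp [h]) (m ω)
  obtain ⟨τ, ⟨hτ0, -⟩, hτ⟩ :=
    exists_threshold_le_integral_indicator_sub_mul hE hm.abs (ae_of_all _ fun ω => abs_nonneg _)
      hm1 lam
  rw [← hL_eq] at hτ
  set A := {ω | τ ≤ |m ω|}
  have hA : MeasurableSet A := measurableSet_le measurable_const hm.abs
  have hAS : (A ∩ {ω | Real.sign (m ω) ≠ Y ω} : Set Ω) =ᵐ[μ] (A ∩ E : Set Ω) := by
    filter_upwards [hYpm] with ω hy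
    refine propext (and_congr_right fun hτm => Real.sign_ne_iff_mul_neg hy ?_)
    exact abs_pos.mp (hτ0.trans_le hτm)
  have hAE : 0 ≤ μ.real (A ∩ E) := measureReal_nonneg
  refine ⟨τ, hτ0.le, ?_, ProbabilityTheory.cond_toReal_le hA hlam0.le ?_⟩
  · rw [abs_of_neg hL, div_le_iff₀ (by positivity), ← measureReal_def]
    nlinarith
  · rw [measureReal_congr hAS]
    linarith

/-- **Rounding lemma (Lemma `rounding` / averaging trick of DGT).**
If the (population) LeakyRelu loss `L_λ(w)` is negative, then there is a threshold `τ ≥ 0`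
such that the annulus `{|⟨w,X⟩| ≥ τ}` has mass at least `|L_λ(w)|/(2λ)` and the
misclassification error of `sgn(⟨w,·⟩)` conditioned on the annulus is at most `λ`. -/
theorem rounding_lemma
    {d : ℕ} {Ω : Type*} [MeasurableSpace Ω] (μ : Measure Ω) [IsProbabilityMeasure μ]
    (X : Ω → EuclideanSpace ℝ (Fin d)) (Y : Ω → ℝ)
    (hX : Measurable X) (hY : Measurable Y)
    (hXball : ∀ᵐ ω ∂μ, ‖X ω‖ ≤ 1)
    (hYpm : ∀ᵐ ω ∂μ, Y ω = 1 ∨ Y ω = -1)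
    (w : EuclideanSpace ℝ (Fin d)) (hw : ‖w‖ ≤ 1)
    (lam : ℝ) (hlam0 : 0 < lam) (hlam : lam ≤ 1/2)
    (hL : ∫ ω, leakyRelu lam (-(Y ω) * ⟪w, X ω⟫) ∂μ < 0) :
    ∃ τ : ℝ, 0 ≤ τ ∧
      |∫ ω, leakyRelu lam (-(Y ω) * ⟪w, X ω⟫) ∂μ| / (2 * lam) ≤
        (μ {ω | τ ≤ |⟪w, X ω⟫|}).toReal ∧
      (ProbabilityTheory.cond μ {ω | τ ≤ |⟪w, X ω⟫|}
        {ω | Real.sign ⟪w, X ω⟫ ≠ Y ω}).toReal ≤ lam :=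
  rounding_lemma_general μ X Y hX hY hXball hYpm w hw lam hlam0 hL
end

section
/- Let Z be a real-valued random variable with finite second moment and let σ: ℝ → ℝ be nondecreasing and L-Lipschitz with L > 0, with σ(Z) having finite variance. Then Cov(Z, σ(Z)) ≥ Var(σ(Z))/L. -/
open MeasureTheory

/-- Pointwise key inequality: for monotone `L`-Lipschitz `σ`,
`(σ a - σ b)^2 ≤ L * ((a - b) * (σ a - σ b))`. -/
lemma key_pointwise {σ : ℝ → ℝ} (hσ_mono : Monotone σ) {L : ℝ}
    (hσ_lip : ∀ a b, |σ a - σ b| ≤ L * |a - b|) (a b : ℝ) :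
    (σ a - σ b) ^ 2 ≤ L * ((a - b) * (σ a - σ b)) := by
  rcases le_total b a with h | h
  · have h1 : σ b ≤ σ a := hσ_mono h
    have h2 : σ a - σ b ≤ L * (a - b) := by
      have := hσ_lip a b
      rwa [abs_of_nonneg (by linarith), abs_of_nonneg (by linarith)] at this
    calc (σ a - σ b) ^ 2 = (σ a - σ b) * (σ a - σ b) := sq (σ a - σ b) ▸ rfl
      _ ≤ (L * (a - b)) * (σ a - σ b) := by
          apply mul_le_mul_of_nonneg_right h2 (by linarith)
      _ = L * ((a - b) * (σ a - σ b)) := by ring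
  · have h1 : σ a ≤ σ b := hσ_mono h
    have h2 : σ b - σ a ≤ L * (b - a) := by
      have := hσ_lip b a
      rwa [abs_of_nonneg (by linarith), abs_of_nonneg (by linarith)] at this
    calc (σ a - σ b) ^ 2 = (σ b - σ a) * (σ b - σ a) := by ring
      _ ≤ (L * (b - a)) * (σ b - σ a) := by
          apply mul_le_mul_of_nonneg_right h2 (by linarith)
      _ = L * ((a - b) * (σ a - σ b)) := by ring

/-- For a real random variable `Z` with finite second moment and `σ` nondecreasing and
`L`-Lipschitz (with `σ(Z)` having finite variance),
`Cov(Z, σ(Z)) ≥ Var(σ(Z)) / L`, where covariances and variances are written via integrals. -/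
theorem cov_monotone_lipschitz_ge_var_div_lipschitz
    {Ω : Type*} [MeasurableSpace Ω] (μ : Measure Ω) [IsProbabilityMeasure μ]
    (Z : Ω → ℝ) (hZ_meas : AEStronglyMeasurable Z μ)
    (hZ2 : Integrable (fun ω => (Z ω) ^ 2) μ)
    (σ : ℝ → ℝ) (hσ_mono : Monotone σ)
    (L : ℝ) (hL : 0 < L) (hσ_lip : ∀ a b, |σ a - σ b| ≤ L * |a - b|)
    (hσZ2 : Integrable (fun ω => (σ (Z ω)) ^ 2) μ) :
    ((∫ ω, (σ (Z ω)) ^ 2 ∂μ) - (∫ ω, σ (Z ω) ∂μ) ^ 2) / L ≤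
      (∫ ω, Z ω * σ (Z ω) ∂μ) - (∫ ω, Z ω ∂μ) * (∫ ω, σ (Z ω) ∂μ) := by
  -- measurability of σ ∘ Z
  have hσZ_meas : AEStronglyMeasurable (fun ω => σ (Z ω)) μ :=
    (hσ_mono.measurable.comp_aemeasurable hZ_meas.aemeasurable).aestronglyMeasurable
  -- integrability facts
  have hZ_int : Integrable Z μ := by
    refine Integrable.mono' ((integrable_const 1).add hZ2) hZ_meas ?_
    filter_upwards with ω
    simp only [Real.norm_eq_abs, Pi.add_apply]
    nlinarith [sq_nonneg (|Z ω| - 1), sq_abs (Z ω), abs_nonneg (Z ω)]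
  have hσZ_int : Integrable (fun ω => σ (Z ω)) μ := by
    refine Integrable.mono' ((integrable_const 1).add hσZ2) hσZ_meas ?_
    filter_upwards with ω
    simp only [Real.norm_eq_abs, Pi.add_apply]
    nlinarith [sq_nonneg (|σ (Z ω)| - 1), sq_abs (σ (Z ω)), abs_nonneg (σ (Z ω))]
  have hZσZ_int : Integrable (fun ω => Z ω * σ (Z ω)) μ := by
    refine Integrable.mono' (hZ2.add hσZ2) (hZ_meas.mul hσZ_meas) ?_
    filter_upwards with ω
    simp only [Real.norm_eq_abs, abs_mul, Pi.add_apply]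
    nlinarith [sq_nonneg (|Z ω| - |σ (Z ω)|), sq_abs (Z ω), sq_abs (σ (Z ω)),
      abs_nonneg (Z ω), abs_nonneg (σ (Z ω))]
  -- work on the product space
  set ν := μ.prod μ with hν
  have _ : IsProbabilityMeasure ν := by infer_instance
  -- integrability on the product space
  have hfst : ∀ {h : Ω → ℝ}, Integrable h μ → Integrable (fun p : Ω × Ω => h p.1) ν := by
    intro h hh
    simpa using hh.mul_prod (integrable_const (1 : ℝ))
  have hsnd : ∀ {h : Ω → ℝ}, Integrable h μ → Integrable (fun p : Ω × Ω => h p.2) ν := by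
    intro h hh
    simpa using (integrable_const (1 : ℝ)).mul_prod hh
  have hF_int : Integrable (fun p : Ω × Ω => (σ (Z p.1) - σ (Z p.2)) ^ 2) ν := by
    have : (fun p : Ω × Ω => (σ (Z p.1) - σ (Z p.2)) ^ 2)
        = fun p : Ω × Ω => (σ (Z p.1)) ^ 2 - 2 * (σ (Z p.1) * σ (Z p.2)) + (σ (Z p.2)) ^ 2 := by
      funext p; ring
    rw [this]
    exact (((hfst hσZ2).sub ((hσZ_int.mul_prod hσZ_int).const_mul 2)).add (hsnd hσZ2))
  have hG_int : Integrable (fun p : Ω × Ω => (Z p.1 - Z p.2) * (σ (Z p.1) - σ (Z p.2))) ν := by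
    have : (fun p : Ω × Ω => (Z p.1 - Z p.2) * (σ (Z p.1) - σ (Z p.2)))
        = fun p : Ω × Ω => Z p.1 * σ (Z p.1) - Z p.1 * σ (Z p.2)
            - Z p.2 * σ (Z p.1) + Z p.2 * σ (Z p.2) := by
      funext p; ring
    rw [this]
    exact (((hfst hZσZ_int).sub (hZ_int.mul_prod hσZ_int)).sub
      (hσZ_int.mul_prod hZ_int |>.congr (Filter.Eventually.of_forall fun p => mul_comm _ _))).add
      (hsnd hZσZ_int)
  -- integral identities
  have hone : (∫ _ : Ω, (1:ℝ) ∂μ) = 1 := by simp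
  have hF_eq : ∫ p, (σ (Z p.1) - σ (Z p.2)) ^ 2 ∂ν
      = 2 * ((∫ ω, (σ (Z ω)) ^ 2 ∂μ) - (∫ ω, σ (Z ω) ∂μ) ^ 2) := by
    have : (fun p : Ω × Ω => (σ (Z p.1) - σ (Z p.2)) ^ 2)
        = fun p : Ω × Ω => (σ (Z p.1)) ^ 2 - 2 * (σ (Z p.1) * σ (Z p.2)) + (σ (Z p.2)) ^ 2 := by
      funext p; ring
    have i2 : Integrable (fun p : Ω × Ω => 2 * (σ (Z p.1) * σ (Z p.2))) ν := by
      exact (hσZ_int.mul_prod hσZ_int).const_mul 2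
    have i1 : Integrable (fun p : Ω × Ω => σ (Z p.1) ^ 2 - 2 * (σ (Z p.1) * σ (Z p.2))) ν := by
      exact (hfst hσZ2).sub i2
    rw [this, integral_add i1 (hsnd hσZ2), integral_sub (hfst hσZ2) i2, integral_const_mul]
    have e1 : ∫ p : Ω × Ω, (σ (Z p.1)) ^ 2 ∂ν = ∫ ω, (σ (Z ω)) ^ 2 ∂μ := by
      have := integral_prod_mul (μ := μ) (ν := μ) (fun ω => (σ (Z ω)) ^ 2) (fun _ => (1:ℝ))
      simpa using this
    have e2 : ∫ p : Ω × Ω, (σ (Z p.2)) ^ 2 ∂ν = ∫ ω, (σ (Z ω)) ^ 2 ∂μ := by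
      have := integral_prod_mul (μ := μ) (ν := μ) (fun _ => (1:ℝ)) (fun ω => (σ (Z ω)) ^ 2)
      simpa using this
    have e3 : ∫ p : Ω × Ω, σ (Z p.1) * σ (Z p.2) ∂ν
        = (∫ ω, σ (Z ω) ∂μ) * (∫ ω, σ (Z ω) ∂μ) :=
      integral_prod_mul (μ := μ) (ν := μ) (fun ω => σ (Z ω)) (fun ω => σ (Z ω))
    rw [e1, e2, e3]; ring
  have hG_eq : ∫ p, (Z p.1 - Z p.2) * (σ (Z p.1) - σ (Z p.2)) ∂ν
      = 2 * ((∫ ω, Z ω * σ (Z ω) ∂μ) - (∫ ω, Z ω ∂μ) * (∫ ω, σ (Z ω) ∂μ)) := by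
    have : (fun p : Ω × Ω => (Z p.1 - Z p.2) * (σ (Z p.1) - σ (Z p.2)))
        = fun p : Ω × Ω => Z p.1 * σ (Z p.1) - Z p.1 * σ (Z p.2)
            - σ (Z p.1) * Z p.2 + Z p.2 * σ (Z p.2) := by
      funext p; ring
    have j1 : Integrable (fun p : Ω × Ω => Z p.1 * σ (Z p.1) - Z p.1 * σ (Z p.2)) ν := by
      exact (hfst hZσZ_int).sub (hZ_int.mul_prod hσZ_int)
    have j2 : Integrable (fun p : Ω × Ω =>
        Z p.1 * σ (Z p.1) - Z p.1 * σ (Z p.2) - σ (Z p.1) * Z p.2) ν := by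
      exact j1.sub (hσZ_int.mul_prod hZ_int)
    rw [this, integral_add j2 (hsnd hZσZ_int), integral_sub j1 (hσZ_int.mul_prod hZ_int),
      integral_sub (hfst hZσZ_int) (hZ_int.mul_prod hσZ_int)]
    have e1 : ∫ p : Ω × Ω, Z p.1 * σ (Z p.1) ∂ν = ∫ ω, Z ω * σ (Z ω) ∂μ := by
      have := integral_prod_mul (μ := μ) (ν := μ) (fun ω => Z ω * σ (Z ω)) (fun _ => (1:ℝ))
      simpa using this
    have e2 : ∫ p : Ω × Ω, Z p.2 * σ (Z p.2) ∂ν = ∫ ω, Z ω * σ (Z ω) ∂μ := by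
      have := integral_prod_mul (μ := μ) (ν := μ) (fun _ => (1:ℝ)) (fun ω => Z ω * σ (Z ω))
      simpa using this
    have e3 : ∫ p : Ω × Ω, Z p.1 * σ (Z p.2) ∂ν = (∫ ω, Z ω ∂μ) * (∫ ω, σ (Z ω) ∂μ) :=
      integral_prod_mul (μ := μ) (ν := μ) Z (fun ω => σ (Z ω))
    have e4 : ∫ p : Ω × Ω, σ (Z p.1) * Z p.2 ∂ν = (∫ ω, σ (Z ω) ∂μ) * (∫ ω, Z ω ∂μ) :=
      integral_prod_mul (μ := μ) (ν := μ) (fun ω => σ (Z ω)) Z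
    rw [e1, e2, e3, e4]; ring
  -- integral inequality
  have hineq : ∫ p, (σ (Z p.1) - σ (Z p.2)) ^ 2 ∂ν
      ≤ L * ∫ p, (Z p.1 - Z p.2) * (σ (Z p.1) - σ (Z p.2)) ∂ν := by
    rw [← integral_const_mul]
    refine integral_mono hF_int (hG_int.const_mul L) ?_
    intro p
    exact key_pointwise hσ_mono hσ_lip (Z p.1) (Z p.2)
  rw [hF_eq, hG_eq] at hineq
  rw [div_le_iff₀ hL]
  nlinarith
end

section
/- Fix integers n ≥ k ≥ 1 and a subset S ⊆ {1,…,n} with |S| = k. For x ∈ {−1,1}^n, let t_S(x) = 1 if x_i = 1 for all i ∈ S and t_S(x) = −1 otherwise, so t_S(x) = −1 + 2^{−k+1}·Σ_{I⊆S} Π_{i∈I} x_i. Let φ_S(x) = −1 + 2^{−k+1} + 2^{−k+1}·Σ_{I⊆S, |I| > k/3} Π_{i∈I} x_i. There is an absolute constant c ∈ (0,1) such that |t_S(x) − φ_S(x)| ≤ 2^{−ck} for every x ∈ {−1,1}^n; consequently, for all sufficiently large k, sgn(φ_S(x)) = t_S(x) for every x ∈ {−1,1}^n. -/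
open Finset

/-- The conjunction on the coordinates in `S`, as a `±1`-valued function on `{-1,1}^n ⊆ ℝ^n`. -/
noncomputable def conj (n : ℕ) (S : Finset (Fin n)) (x : Fin n → ℝ) : ℝ :=
  if ∀ i ∈ S, x i = 1 then 1 else -1

/-- The Fourier truncation `φ_S` of the conjunction `t_S`, obtained by zeroing out all Fourier
coefficients on subsets `I ⊆ S` with `1 ≤ |I| ≤ k/3`. -/
noncomputable def phiS (n k : ℕ) (S : Finset (Fin n)) (x : Fin n → ℝ) : ℝ :=
  -1 + (2:ℝ) ^ (1 - (k:ℤ)) + (2:ℝ) ^ (1 - (k:ℤ)) *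
    ∑ I ∈ S.powerset.filter fun I => k < 3 * I.card, ∏ i ∈ I, x i

/-! On the hypercube, `t_S - φ_S = 2^{1-k} Σ χ_I` over the nonempty `I ⊆ S` with `|I| ≤ k/3`, so
the error is at most `2^{1-k} N` with `N` the number of such `I`. Weighting each of them by
`2^{k/3-|I|} ≥ 1` and summing over all `I ⊆ S` gives `N ≤ 2^{k/3} (3/2)^k`, hence an error of at
most `2 (2^{1/3}·3/4)^k`, which decays because `(2^{1/3}·3/4)^3 = 27/32`. This is useless for small
`k`, but complementation `I ↦ S \ I` gives `N < 2^{k-1}`, so the error is below `1` for every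
`k`; the two bounds together yield a uniform `2^{-ck}`. An error below `1` forces
`sgn φ_S = t_S = ±1`. -/

variable {α : Type*}

lemma prod_add_one_eq_ite {S : Finset α} {x : α → ℝ} (hx : ∀ i, x i = 1 ∨ x i = -1) :
    ∏ i ∈ S, (x i + 1) = if ∀ i ∈ S, x i = 1 then 2 ^ #S else 0 := by
  split_ifs with h
  · rw [prod_congr rfl fun i hi => by rw [h i hi, one_add_one_eq_two], prod_const]
  · push Not at h
    obtain ⟨i, hi, hxi⟩ := h
    exact prod_eq_zero hi (by rw [(hx i).resolve_left hxi, neg_add_cancel])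

lemma conj_eq_fourier {n : ℕ} (S : Finset (Fin n)) {x : Fin n → ℝ}
    (hx : ∀ i, x i = 1 ∨ x i = -1) :
    conj n S x = -1 + (2:ℝ) ^ (1 - (#S:ℤ)) * ∑ I ∈ S.powerset, ∏ i ∈ I, x i := by
  rw [← prod_add_one, prod_add_one_eq_ite hx, conj]
  split_ifs
  · rw [← zpow_natCast, ← zpow_add₀ two_ne_zero]
    norm_num
  · ring

lemma conj_eq_one_or_eq_neg_one (n : ℕ) (S : Finset (Fin n)) (x : Fin n → ℝ) :
    conj n S x = 1 ∨ conj n S x = -1 := by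
  unfold conj
  split_ifs <;> simp

def lowSets (S : Finset α) (k : ℕ) : Finset (Finset α) := {I ∈ S.powerset | 3 * #I ≤ k}

lemma conj_sub_phiS {n : ℕ} (S : Finset (Fin n)) {x : Fin n → ℝ}
    (hx : ∀ i, x i = 1 ∨ x i = -1) :
    conj n S x - phiS n #S S x
      = (2:ℝ) ^ (1 - (#S:ℤ)) * ∑ I ∈ (lowSets S #S).erase ∅, ∏ i ∈ I, x i := by
  have hempty : ∅ ∈ lowSets S #S := by simp [lowSets]
  rw [conj_eq_fourier S hx, phiS, ← sum_filter_add_sum_filter_not S.powerset (#S < 3 * #·)]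
  simp only [not_lt]
  unfold lowSets at hempty ⊢
  rw [← add_sum_erase _ _ hempty, prod_empty]
  ring

lemma abs_sum_prod_le_card {T : Finset (Finset α)} {x : α → ℝ}
    (hx : ∀ i, x i = 1 ∨ x i = -1) : |∑ I ∈ T, ∏ i ∈ I, x i| ≤ #T := by
  have habs : ∀ i, |x i| = 1 := fun i => by rcases hx i with h | h <;> simp [h]
  calc |∑ I ∈ T, ∏ i ∈ I, x i| ≤ ∑ I ∈ T, |∏ i ∈ I, x i| := abs_sum_le_sum_abs _ _
    _ = #T := by simp [abs_prod, habs]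

lemma abs_conj_sub_phiS_le {n : ℕ} (S : Finset (Fin n)) {x : Fin n → ℝ}
    (hx : ∀ i, x i = 1 ∨ x i = -1) :
    |conj n S x - phiS n #S S x| ≤ 2 / 2 ^ #S * (#(lowSets S #S) - 1) := by
  have hcard : (#((lowSets S #S).erase ∅) : ℝ) = #(lowSets S #S) - 1 := by
    rw [← card_erase_add_one (by simp [lowSets] : ∅ ∈ lowSets S #S), Nat.cast_succ,
      add_sub_cancel_right]
  have hpow : (2:ℝ) ^ (1 - (#S:ℤ)) = 2 / 2 ^ #S := by
    rw [zpow_sub₀ two_ne_zero, zpow_one, zpow_natCast]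
  rw [conj_sub_phiS S hx, abs_mul, hpow, abs_of_pos (by positivity), ← hcard]
  exact mul_le_mul_of_nonneg_left (abs_sum_prod_le_card hx) (by positivity)

lemma two_mul_card_lowSets_le [DecidableEq α] {S : Finset α} {k : ℕ} (h : 2 * k < 3 * #S) :
    2 * #(lowSets S k) ≤ 2 ^ #S := by
  have hcompl : #(lowSets S k) ≤ #{I ∈ S.powerset | ¬ 3 * #I ≤ k} := by
    refine card_le_card_of_injOn (S \ ·) (fun I hI => ?_) (fun I hI J hJ hIJ => ?_)
    · simp only [lowSets, coe_filter, Set.mem_ofPred_eq, mem_powerset] at hI ⊢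
      rw [card_sdiff_of_subset hI.1]
      exact ⟨sdiff_subset, by omega⟩
    · simp only [lowSets, coe_filter, Set.mem_ofPred_eq, mem_powerset] at hI hJ
      rw [← Finset.sdiff_sdiff_eq_self hI.1, ← Finset.sdiff_sdiff_eq_self hJ.1]
      exact congrArg (S \ ·) hIJ
  have := card_filter_add_card_filter_not (s := S.powerset) (fun I => 3 * #I ≤ k)
  rw [card_powerset] at this
  unfold lowSets at hcompl ⊢
  omega

lemma card_lowSets_le (S : Finset α) (k : ℕ) :
    (#(lowSets S k) : ℝ) ≤ ((2:ℝ) ^ (3:ℝ)⁻¹) ^ k * (3 / 2) ^ #S := by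
  set θ : ℝ := 2 ^ (3:ℝ)⁻¹
  have hθ3 : θ ^ 3 = 2 := by
    exact_mod_cast Real.rpow_inv_natCast_pow (n := 3) zero_le_two three_ne_zero
  have hθ1 : 1 ≤ θ := Real.one_le_rpow one_le_two (by norm_num)
  have hweight : ∀ I ∈ lowSets S k, (1:ℝ) ≤ θ ^ k * ∏ _i ∈ I, (1 / 2) := by
    intro I hI
    have h2 : (2:ℝ) ^ #I ≤ θ ^ k := by
      rw [← hθ3, ← pow_mul]
      exact pow_le_pow_right₀ hθ1 (by simp only [lowSets, mem_filter] at hI; omega)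
    rw [prod_const, div_pow, one_pow, mul_one_div, le_div_iff₀ (by positivity), one_mul]
    exact h2
  calc (#(lowSets S k) : ℝ) = ∑ _I ∈ lowSets S k, (1:ℝ) := by simp
    _ ≤ ∑ I ∈ lowSets S k, θ ^ k * ∏ _i ∈ I, (1 / 2) := sum_le_sum hweight
    _ ≤ ∑ I ∈ S.powerset, θ ^ k * ∏ _i ∈ I, (1 / 2) :=
        sum_le_sum_of_subset_of_nonneg (filter_subset _ _) fun _ _ _ => by positivity
    _ = θ ^ k * (3 / 2) ^ #S := by rw [← mul_sum, ← prod_add_one, prod_const]; norm_num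

lemma two_rpow_inv_three_mul_lt_one : (2:ℝ) ^ (3:ℝ)⁻¹ * (3 / 4) < 1 := by
  have hcube : ((2:ℝ) ^ (3:ℝ)⁻¹ * (3 / 4)) ^ 3 < 1 := by
    rw [mul_pow, show (3:ℝ) = (3:ℕ) by norm_num,
      Real.rpow_inv_natCast_pow zero_le_two three_ne_zero]
    norm_num
  exact (pow_lt_one_iff_of_nonneg (by positivity) three_ne_zero).mp hcube

open Filter Topology in
/-- The finitely many `k` before the geometric regime are absorbed by taking `c` close to `0`. -/
lemma exists_forall_min_le_two_rpow_neg {u : ℕ → ℝ} (hu : ∀ k, 1 ≤ k → u k < 1) (A : ℝ)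
    {r : ℝ} (hr₀ : 0 ≤ r) (hr : r < 1) :
    ∃ c : ℝ, 0 < c ∧ c < 1 ∧ ∀ k : ℕ, 1 ≤ k → min (u k) (A * r ^ k) ≤ 2 ^ (-(c * k)) := by
  obtain ⟨μ, hrμ, hμ⟩ := exists_between hr
  have hμ₀ : 0 < μ := hr₀.trans_lt hrμ
  obtain ⟨K, hK⟩ : ∃ K, ∀ k ≥ K, A * r ^ k ≤ μ ^ k := by
    have h := (tendsto_pow_atTop_nhds_zero_of_lt_one (div_nonneg hr₀ hμ₀.le)
      ((div_lt_one hμ₀).2 hrμ)).const_mul A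
    rw [mul_zero] at h
    obtain ⟨K, hK⟩ := eventually_atTop.1 (h.eventually (gt_mem_nhds zero_lt_one))
    refine ⟨K, fun k hk => ?_⟩
    have := (hK k hk).le
    rwa [div_pow, ← mul_div_assoc, div_le_one (pow_pos hμ₀ k)] at this
  have hcont : ∀ k : ℕ, Tendsto (fun c : ℝ => (2:ℝ) ^ (-(c * k))) (𝓝[>] (0:ℝ)) (𝓝 1) := fun k => by
    have : Continuous fun c : ℝ => (2:ℝ) ^ (-(c * k)) := by fun_prop (disch := norm_num)
    simpa using (this.tendsto 0).mono_left nhdsWithin_le_nhds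
  have hsmall : ∀ᶠ c : ℝ in 𝓝[>] 0, ∀ k ∈ Ico 1 K, u k ≤ 2 ^ (-(c * k)) :=
    (eventually_all_finset _).2 fun k hk =>
      ((hcont k).eventually_const_lt (hu k (mem_Ico.1 hk).1)).mono fun _ h => h.le
  have hunit : ∀ᶠ c in 𝓝[>] (0:ℝ), c ∈ Set.Ioo 0 1 := Ioo_mem_nhdsGT one_pos
  obtain ⟨c, ⟨hc₀, hc₁⟩, hμc, hc⟩ :=
    (hunit.and (((hcont 1).eventually_const_lt hμ).and hsmall)).exists
  refine ⟨c, hc₀, hc₁, fun k hk => ?_⟩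
  rcases lt_or_ge k K with hkK | hKk
  · exact (min_le_left _ _).trans (hc k (mem_Ico.2 ⟨hk, hkK⟩))
  · rw [Nat.cast_one, mul_one] at hμc
    calc min (u k) (A * r ^ k) ≤ A * r ^ k := min_le_right _ _
      _ ≤ μ ^ k := hK k hKk
      _ ≤ (2 ^ (-c)) ^ k := pow_le_pow_left₀ hμ₀.le hμc.le k
      _ = 2 ^ (-(c * k)) := by rw [← Real.rpow_mul_natCast zero_le_two, neg_mul]

lemma abs_conj_sub_phiS_le_min {n : ℕ} {S : Finset (Fin n)} (hS : S.Nonempty) {x : Fin n → ℝ}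
    (hx : ∀ i, x i = 1 ∨ x i = -1) :
    |conj n S x - phiS n #S S x|
      ≤ min (1 - 2 / 2 ^ #S) (2 * ((2:ℝ) ^ (3:ℝ)⁻¹ * (3 / 4)) ^ #S) := by
  refine (abs_conj_sub_phiS_le S hx).trans (le_min ?_ ?_)
  · have hhalf : 2 * #(lowSets S #S) ≤ 2 ^ #S :=
      two_mul_card_lowSets_le (by have := hS.card_pos; omega)
    have : 2 / 2 ^ #S * (#(lowSets S #S) : ℝ) ≤ 1 := by
      rw [div_mul_eq_mul_div, div_le_one (by positivity)]
      exact_mod_cast hhalf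
    linarith
  · calc 2 / 2 ^ #S * ((#(lowSets S #S) : ℝ) - 1)
        ≤ 2 / 2 ^ #S * (((2:ℝ) ^ (3:ℝ)⁻¹) ^ #S * (3 / 2) ^ #S) :=
          mul_le_mul_of_nonneg_left (by linarith [card_lowSets_le S #S]) (by positivity)
      _ = 2 * ((2:ℝ) ^ (3:ℝ)⁻¹ * (3 / 4)) ^ #S := by
          rw [mul_pow, show (3 / 4 : ℝ) = 3 / 2 / 2 by norm_num, div_pow (3 / 2 : ℝ)]
          field_simp

lemma sign_eq_of_abs_sub_lt_one {s t : ℝ} (hs : s = 1 ∨ s = -1) (h : |s - t| < 1) :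
    Real.sign t = s := by
  rw [abs_lt] at h
  rcases hs with rfl | rfl
  · exact Real.sign_of_pos (by linarith)
  · exact Real.sign_of_neg (by linarith)

/-- **Fact (`bounded`).** The conjunction `t_S` has the Fourier expansion
`t_S = -1 + 2^{-k+1} Σ_{I ⊆ S} χ_I`, and there is an absolute constant `c ∈ (0,1)` with
`|t_S(x) - φ_S(x)| ≤ 2^{-ck}` on the hypercube; consequently, for all sufficiently large `k`,
`sgn(φ_S(x)) = t_S(x)` for every hypercube point `x`. -/
theorem conj_fourier_truncation_close :
    ∃ c : ℝ, 0 < c ∧ c < 1 ∧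
      (∀ (n k : ℕ), 1 ≤ k → k ≤ n → ∀ S : Finset (Fin n), S.card = k →
        ∀ x : Fin n → ℝ, (∀ i, x i = 1 ∨ x i = -1) →
          (conj n S x = -1 + (2:ℝ) ^ (1 - (k:ℤ)) * ∑ I ∈ S.powerset, ∏ i ∈ I, x i) ∧
          |conj n S x - phiS n k S x| ≤ (2:ℝ) ^ (-(c * (k:ℝ)))) ∧
      ∃ k₀ : ℕ, ∀ (n k : ℕ), k₀ ≤ k → k ≤ n → ∀ S : Finset (Fin n), S.card = k →
        ∀ x : Fin n → ℝ, (∀ i, x i = 1 ∨ x i = -1) →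
          Real.sign (phiS n k S x) = conj n S x := by
  obtain ⟨c, hc₀, hc₁, hc⟩ := exists_forall_min_le_two_rpow_neg (u := fun k => 1 - 2 / 2 ^ k)
    (fun k _ => sub_lt_self _ (by positivity)) 2 (by positivity) two_rpow_inv_three_mul_lt_one
  have hclose : ∀ (n k : ℕ), 1 ≤ k → ∀ S : Finset (Fin n), #S = k → ∀ x : Fin n → ℝ,
      (∀ i, x i = 1 ∨ x i = -1) → |conj n S x - phiS n k S x| ≤ 2 ^ (-(c * k)) := by
    rintro n k hk S rfl x hx
    exact (abs_conj_sub_phiS_le_min (card_pos.1 hk) hx).trans (hc _ hk)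
  refine ⟨c, hc₀, hc₁, fun n k hk _ S hS x hx => ⟨?_, hclose n k hk S hS x hx⟩,
    1, fun n k hk _ S hS x hx => ?_⟩
  · subst hS
    exact conj_eq_fourier S hx
  · refine sign_eq_of_abs_sub_lt_one (conj_eq_one_or_eq_neg_one n S x)
      ((hclose n k hk S hS x hx).trans_lt ?_)
    exact Real.rpow_lt_one_of_one_lt_of_neg one_lt_two
      (neg_neg_of_pos (mul_pos hc₀ (Nat.cast_pos.2 hk)))
end

section
/- Fix integers n ≥ k ≥ 1 and a subset S ⊆ {1,…,n} with |S| = k, and define t_S and φ_S as the conjunction on S and its Fourier truncation. Let Z = Σ_{x∈{−1,1}^n} |φ_S(x)|, let D^S be the probability distribution on {−1,1}^n with D^S(x) = |φ_S(x)|/Z, and let U(x) = 2^{−n} be the uniform distribution. There is an absolute constant c ∈ (0,1) such that, for all sufficiently large k, |D^S(x)/U(x) − 1| ≤ 2^{−ck} for every x ∈ {−1,1}^n. -/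
open Finset

lemma sum_powerset_prod {n : ℕ} (S : Finset (Fin n)) (x : Fin n → ℝ) :
    ∑ I ∈ S.powerset, ∏ i ∈ I, x i = ∏ i ∈ S, (x i + 1) := by
  rw [Finset.prod_add]
  simp

lemma hyper_prod_abs {n : ℕ} (b : Fin n → Bool) (I : Finset (Fin n)) :
    |∏ i ∈ I, (if b i then (1:ℝ) else -1)| = 1 := by
  rw [Finset.abs_prod]
  apply Finset.prod_eq_one
  intro i _
  by_cases h : b i <;> simp [h]

lemma abs_phiS_near_one {n k : ℕ} (S : Finset (Fin n)) (hS : S.card = k)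
    (b : Fin n → Bool) :
    |(|phiS n k S (fun i => if b i then 1 else -1)|) - 1| ≤
      (2:ℝ)^(1-(k:ℤ)) *
        ((S.powerset.filter fun I => ¬ k < 3 * I.card ∧ I ≠ ∅).card : ℝ) := by
  set x : Fin n → ℝ := fun i => if b i then 1 else -1 with hx
  set T : ℝ := ∑ I ∈ S.powerset, ∏ i ∈ I, x i with hT
  set A : ℝ := ∑ I ∈ S.powerset.filter (fun I => k < 3 * I.card), ∏ i ∈ I, x i with hA
  set R : ℝ := ∑ I ∈ S.powerset.filter (fun I => ¬ k < 3 * I.card ∧ I ≠ ∅), ∏ i ∈ I, x i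
    with hR
  have hsplit : A + (1 + R) = T := by
    have h1 : 1 + R = ∑ I ∈ S.powerset.filter (fun I => ¬ k < 3 * I.card), ∏ i ∈ I, x i := by
      have hmem : (∅ : Finset (Fin n)) ∈ S.powerset.filter (fun I => ¬ k < 3 * I.card) := by
        simp
      have h2 := Finset.add_sum_erase _ (fun I => ∏ i ∈ I, x i) hmem
      simp only [Finset.prod_empty] at h2
      rw [← h2, hR]
      congr 1
      apply Finset.sum_congr _ (fun _ _ => rfl)
      ext I
      simp only [Finset.mem_erase, Finset.mem_filter, Finset.mem_powerset, ne_eq]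
      tauto
    rw [h1, hA, hT, Finset.sum_filter_add_sum_filter_not]
  set t : ℝ := -1 + (2:ℝ)^(1-(k:ℤ)) * T with ht
  have habs_t : |t| = 1 := by
    rw [ht, hT, sum_powerset_prod]
    by_cases h : ∀ i ∈ S, b i = true
    · have : ∏ i ∈ S, (x i + 1) = 2 ^ k := by
        rw [← hS]
        rw [Finset.prod_congr rfl (g := fun _ => (2:ℝ)) (fun i hi => by simp [hx, h i hi]; norm_num)]
        simp
      rw [this]
      have h2 : (2:ℝ)^(1-(k:ℤ)) * 2 ^ k = 2 := by
        rw [show ((2:ℝ)^k : ℝ) = (2:ℝ)^(k:ℤ) from (zpow_natCast 2 k).symm,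
          ← zpow_add₀ (by norm_num : (2:ℝ) ≠ 0)]
        norm_num
      rw [h2]; norm_num
    · push_neg at h
      obtain ⟨i, hi, hbi⟩ := h
      have : ∏ j ∈ S, (x j + 1) = 0 :=
        Finset.prod_eq_zero hi (by simp [hx, hbi])
      rw [this]
      norm_num
  have hdiff : phiS n k S x - t = -((2:ℝ)^(1-(k:ℤ)) * R) := by
    rw [phiS, ht, ← hA, ← hsplit]; ring
  have hRb : |R| ≤ ((S.powerset.filter fun I => ¬ k < 3 * I.card ∧ I ≠ ∅).card : ℝ) := by
    rw [hR]
    refine le_trans (Finset.abs_sum_le_sum_abs _ _) ?_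
    rw [Finset.sum_congr rfl (g := fun _ => (1:ℝ)) (fun I _ => hyper_prod_abs b I)]
    simp
  calc |(|phiS n k S x|) - 1| = |(|phiS n k S x|) - (|t|)| := by rw [habs_t]
    _ ≤ |phiS n k S x - t| := abs_abs_sub_abs_le_abs_sub _ _
    _ = (2:ℝ)^(1-(k:ℤ)) * |R| := by rw [hdiff, abs_neg, abs_mul, abs_of_pos (by positivity : (0:ℝ) < (2:ℝ)^(1-(k:ℤ)))]
    _ ≤ _ := by
        apply mul_le_mul_of_nonneg_left hRb (by positivity)

lemma sum_powerset_half {n : ℕ} (S : Finset (Fin n)) :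
    ∑ I ∈ S.powerset, ((1:ℝ)/2) ^ I.card = (3/2) ^ S.card := by
  have := Finset.prod_add (fun _ : Fin n => (1:ℝ)/2) (fun _ => 1) S
  simp at this
  calc ∑ I ∈ S.powerset, ((1:ℝ)/2) ^ I.card
      = ∑ I ∈ S.powerset, ((2:ℝ) ^ I.card)⁻¹ := by simp [one_div, inv_pow]
    _ = (2⁻¹ + 1) ^ S.card := this.symm
    _ = (3/2) ^ S.card := by norm_num

lemma count_small {n k : ℕ} (S : Finset (Fin n)) (hS : S.card = k) :
    ((S.powerset.filter fun I => ¬ k < 3 * I.card ∧ I ≠ ∅).card : ℝ) ≤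
      2^(k/3) * (3/2)^k := by
  have h1 : ((S.powerset.filter fun I => ¬ k < 3 * I.card ∧ I ≠ ∅).card : ℝ)
      = ∑ _I ∈ S.powerset.filter fun I => ¬ k < 3 * I.card ∧ I ≠ ∅, (1:ℝ) := by simp
  rw [h1]
  calc ∑ _I ∈ S.powerset.filter fun I => ¬ k < 3 * I.card ∧ I ≠ ∅, (1:ℝ)
      ≤ ∑ I ∈ S.powerset.filter fun I => ¬ k < 3 * I.card ∧ I ≠ ∅,
          (2:ℝ)^(k/3) * (1/2)^I.card := by
        apply Finset.sum_le_sum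
        intro I hI
        simp only [Finset.mem_filter, not_lt] at hI
        have hle : I.card ≤ k/3 := Nat.le_div_iff_mul_le (by norm_num) |>.mpr
          (by omega)
        have h2 : (2:ℝ)^I.card ≤ 2^(k/3) := pow_le_pow_right₀ (by norm_num) hle
        have h3 : (2:ℝ)^I.card * (1/2)^I.card = 1 := by
          rw [← mul_pow]; norm_num
        calc (1:ℝ) = (2:ℝ)^I.card * (1/2)^I.card := h3.symm
          _ ≤ (2:ℝ)^(k/3) * (1/2)^I.card :=
              mul_le_mul_of_nonneg_right h2 (by positivity)
    _ ≤ ∑ I ∈ S.powerset, (2:ℝ)^(k/3) * (1/2)^I.card := by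
        apply Finset.sum_le_sum_of_subset_of_nonneg (Finset.filter_subset _ _)
        intro I _ _
        positivity
    _ = 2^(k/3) * (3/2)^k := by
        rw [← Finset.mul_sum, sum_powerset_half, hS]

lemma key_numeric {k : ℕ} (hk : 180 ≤ k) :
    4 * ((2:ℝ)^(1-(k:ℤ)) * (2^(k/3) * (3/2)^k)) ≤ (2:ℝ) ^ (-(1/20 * (k:ℝ))) := by
  have h2 : (2:ℝ)^(1-(k:ℤ)) = 2 / 2^k := by
    rw [zpow_sub₀ (by norm_num : (2:ℝ) ≠ 0), zpow_one, zpow_natCast]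
  rw [h2]
  set m := k/3 with hm
  have hm3 : 3 * m ≤ k := by omega
  apply le_of_pow_le_pow_left₀ (n := 60) (by norm_num) (by positivity)
  have hr60 : ((2:ℝ) ^ (-(1/20 * (k:ℝ)))) ^ (60:ℕ) = ((2:ℝ)^(3*k))⁻¹ := by
    rw [← Real.rpow_natCast ((2:ℝ) ^ (-(1/20 * (k:ℝ)))) 60, ← Real.rpow_natCast 2 (3*k),
      ← Real.rpow_neg (by norm_num), ← Real.rpow_mul (by norm_num)]
    norm_num
    ring_nf
  rw [hr60]
  have hL : (4 * ((2:ℝ) / 2^k * (2^m * (3/2)^k)))^60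
      = 2^(180+m*60) * 3^(k*60) / 2^(k*120) := by
    rw [div_pow (3:ℝ) 2 k]
    field_simp
    ring
  rw [hL, inv_eq_one_div, div_le_div_iff₀ (by positivity) (by positivity), one_mul]
  calc (2:ℝ)^(180+m*60) * 3^(k*60) * 2^(3*k)
      = 2^(180+m*60+3*k) * 3^(k*60) := by ring
    _ ≤ 2^(180+m*60+3*k) * 2^(96*k) := by
        apply mul_le_mul_of_nonneg_left _ (by positivity)
        rw [show k*60 = 60*k by ring, pow_mul, pow_mul]
        exact pow_le_pow_left₀ (by norm_num) (by norm_num) k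
    _ = 2^(180+m*60+3*k+96*k) := by rw [← pow_add]
    _ ≤ 2^(k*120) := by
        apply pow_le_pow_right₀ (by norm_num)
        omega

/-- **Fact (`LR`).** With `Z = Σ_x |φ_S(x)|`, `D^S(x) = |φ_S(x)|/Z` and `U(x) = 2^{-n}`,
the likelihood ratio `D^S(x)/U(x)` is within `2^{-ck}` of `1` uniformly over the hypercube,
for an absolute constant `c ∈ (0,1)` and all sufficiently large `k`. Hypercube points are
encoded as `b : Fin n → Bool` via `x i = if b i then 1 else -1`. -/
theorem tilted_conjunction_likelihood_ratio_close_to_one :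
    ∃ c : ℝ, 0 < c ∧ c < 1 ∧ ∃ k₀ : ℕ, ∀ (n k : ℕ), k₀ ≤ k → k ≤ n →
      ∀ S : Finset (Fin n), S.card = k → ∀ b : Fin n → Bool,
        |(|phiS n k S fun i => if b i then 1 else -1| /
            ∑ b' : Fin n → Bool, |phiS n k S fun i => if b' i then 1 else -1|) /
          ((2:ℝ) ^ n)⁻¹ - 1| ≤ (2:ℝ) ^ (-(c * (k:ℝ))) := by
  refine ⟨1/20, by norm_num, by norm_num, 180, ?_⟩
  intro n k hk hkn S hS b
  set ε : ℝ := (2:ℝ)^(1-(k:ℤ)) *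
    ((S.powerset.filter fun I => ¬ k < 3 * I.card ∧ I ≠ ∅).card : ℝ) with hε
  have hε0 : 0 ≤ ε := by positivity
  set r : ℝ := (2:ℝ) ^ (-(1/20 * (k:ℝ))) with hr
  have hr0 : 0 ≤ r := by rw [hr]; positivity
  have h4ε : 4 * ε ≤ r := by
    rw [hr, hε]
    refine le_trans ?_ (key_numeric hk)
    have hc := count_small S hS
    have h2p : (0:ℝ) < (2:ℝ)^(1-(k:ℤ)) := by positivity
    nlinarith [mul_le_mul_of_nonneg_left hc h2p.le]
  have hrle1 : r ≤ 1 := by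
    rw [hr]
    apply Real.rpow_le_one_of_one_le_of_nonpos (by norm_num)
    have : (0:ℝ) ≤ (k:ℝ) := Nat.cast_nonneg k
    nlinarith
  have hεq : ε ≤ 1/4 := by linarith
  have hbnd : ∀ b' : Fin n → Bool,
      1 - ε ≤ |phiS n k S fun i => if b' i then 1 else -1| ∧
      |phiS n k S fun i => if b' i then 1 else -1| ≤ 1 + ε := by
    intro b'
    have := abs_le.mp (abs_phiS_near_one S hS b')
    constructor <;> [linarith [this.1]; linarith [this.2]]
  set Z : ℝ := ∑ b' : Fin n → Bool, |phiS n k S fun i => if b' i then 1 else -1| with hZ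
  set a : ℝ := |phiS n k S fun i => if b i then 1 else -1| with ha
  have hcard : ((Finset.univ : Finset (Fin n → Bool)).card : ℝ) = 2^n := by
    simp [Finset.card_univ]
  have hZlow : (2:ℝ)^n * (1-ε) ≤ Z := by
    rw [hZ]
    calc (2:ℝ)^n * (1-ε) = ∑ _b' : Fin n → Bool, (1-ε) := by
          rw [Finset.sum_const, nsmul_eq_mul, hcard]
      _ ≤ ∑ b' : Fin n → Bool, |phiS n k S fun i => if b' i then 1 else -1| :=
          Finset.sum_le_sum fun b' _ => (hbnd b').1
  have hZhigh : Z ≤ (2:ℝ)^n * (1+ε) := by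
    rw [hZ]
    calc ∑ b' : Fin n → Bool, |phiS n k S fun i => if b' i then 1 else -1|
        ≤ ∑ _b' : Fin n → Bool, (1+ε) := Finset.sum_le_sum fun b' _ => (hbnd b').2
      _ = (2:ℝ)^n * (1+ε) := by rw [Finset.sum_const, nsmul_eq_mul, hcard]
  have h2n : (0:ℝ) < 2^n := by positivity
  have hZ0 : 0 < Z := lt_of_lt_of_le (mul_pos h2n (by linarith)) hZlow
  have hfb : 1 - ε ≤ a ∧ a ≤ 1 + ε := hbnd b
  have hgoal : a / Z / ((2:ℝ)^n)⁻¹ - 1 = (a * 2^n - Z) / Z := by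
    field_simp
  rw [hgoal, abs_div, abs_of_pos hZ0, div_le_iff₀ hZ0]
  have hrεle : r * ε ≤ ε := by nlinarith
  have hkey2 : 2 * ε ≤ r * (1-ε) := by linarith
  have h3 : (2*ε)*2^n ≤ (r*(1-ε))*2^n := mul_le_mul_of_nonneg_right hkey2 h2n.le
  have h2' : r * ((2:ℝ)^n * (1-ε)) ≤ r * Z := mul_le_mul_of_nonneg_left hZlow hr0
  have hup : a * 2^n - Z ≤ r * Z := by
    have h1 : a * 2^n ≤ (1+ε) * 2^n := mul_le_mul_of_nonneg_right hfb.2 h2n.le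
    nlinarith
  have hlo : -(r * Z) ≤ a * 2^n - Z := by
    have h1 : (1-ε) * 2^n ≤ a * 2^n := mul_le_mul_of_nonneg_right hfb.1 h2n.le
    nlinarith
  exact abs_le.mpr ⟨hlo, hup⟩
end

section
/- For all integers n ≥ k ≥ 1, there exists a family F of k-element subsets of {1,…,n} such that |S ∩ T| ≤ k/3 for all distinct S, T ∈ F, and |F| ≥ (n/(8k))^{k/3} = 2^{−k}(n/k)^{k/3}. -/
/-!
Take a maximal family `F` of `k`-sets whose pairwise intersections have at most `⌊k/3⌋`
points, and put `m = ⌊k/3⌋ + 1`. By maximality every `k`-set meets some member of `F` in at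
least `m` points, while a fixed `k`-set meets at most `C(k,m)·C(n-m,k-m)` of them that way;
hence `C(n,k) ≤ |F|·C(k,m)·C(n-m,k-m)`. The identity `C(n,k)·C(k,m) = C(n,m)·C(n-m,k-m)` turns
this into `C(n,m) ≤ |F|·C(k,m)²`, and `(n/k)^m·C(k,m) ≤ C(n,m)` together with
`C(k,m) ≤ 2^k` gives `|F| ≥ 2^{-k}(n/k)^m ≥ 2^{-k}(n/k)^{k/3}`.
-/

open Finset

theorem Finset.exists_maximal_pairwise_subset {α : Type*} {r : α → α → Prop}
    (hr : ∀ a b, r a b → r b a) (P : Finset α) :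
    ∃ F ⊆ P, (F : Set α).Pairwise r ∧ ∀ T ∈ P, T ∉ F → ∃ S ∈ F, ¬ r S T := by
  classical
  obtain ⟨F, hFmax⟩ := (P.powerset.filter fun F : Finset α => (F : Set α).Pairwise r)
    |>.exists_maximal ⟨∅, by simp⟩
  obtain ⟨hFP, hF⟩ := by simpa only [mem_filter, mem_powerset] using hFmax.prop
  refine ⟨F, hFP, hF, fun T hT hTF => ?_⟩
  by_contra! hcompat
  have hinsert : insert T F ∈ P.powerset.filter fun F : Finset α => (F : Set α).Pairwise r := by
    rw [mem_filter, mem_powerset, coe_insert, Set.pairwise_insert]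
    exact ⟨insert_subset hT hFP, hF, fun S hS _ => ⟨hr _ _ (hcompat S hS), hcompat S hS⟩⟩
  exact hTF (hFmax.le_of_ge hinsert (subset_insert T F) (mem_insert_self T F))

theorem exists_pairwise_inter_le_forall_exists_lt_inter (α : Type*) [Fintype α] [DecidableEq α]
    {k t : ℕ} (htk : t < k) :
    ∃ F ⊆ (univ : Finset α).powersetCard k,
      (F : Set (Finset α)).Pairwise (fun S T => #(S ∩ T) ≤ t) ∧
      ∀ T ∈ (univ : Finset α).powersetCard k, ∃ S ∈ F, t < #(S ∩ T) := by
  obtain ⟨F, hFP, hF, hmax⟩ := ((univ : Finset α).powersetCard k)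
    |>.exists_maximal_pairwise_subset (r := fun S T => #(S ∩ T) ≤ t) fun S T h => by
      rwa [inter_comm]
  refine ⟨F, hFP, hF, fun T hT => ?_⟩
  by_cases hTF : T ∈ F
  · exact ⟨T, hTF, by rwa [inter_self, (mem_powersetCard.1 hT).2]⟩
  · obtain ⟨S, hS, hST⟩ := hmax T hT hTF
    exact ⟨S, hS, not_le.1 hST⟩

theorem card_filter_le_card_inter_le {α : Type*} [Fintype α] [DecidableEq α]
    (S : Finset α) {k m : ℕ} (hmk : m ≤ k) :
    #{T ∈ (univ : Finset α).powersetCard k | m ≤ #(S ∩ T)} ≤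
      (#S).choose m * (Fintype.card α - m).choose (k - m) := by
  have hsub : {T ∈ (univ : Finset α).powersetCard k | m ≤ #(S ∩ T)} ⊆
      (S.powersetCard m).biUnion fun A => {T ∈ (univ : Finset α).powersetCard k | A ⊆ T} := by
    intro T hT
    obtain ⟨hTk, hmT⟩ := mem_filter.1 hT
    obtain ⟨A, hA, rfl⟩ := exists_subset_card_eq hmT
    exact mem_biUnion.2 ⟨A, mem_powersetCard.2 ⟨hA.trans inter_subset_left, rfl⟩,
      mem_filter.2 ⟨hTk, hA.trans inter_subset_right⟩⟩
  refine (card_le_card hsub).trans ?_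
  rw [← card_powersetCard]
  refine card_biUnion_le_card_mul _ _ _ fun A hA => ?_
  obtain ⟨-, rfl⟩ := mem_powersetCard.1 hA
  rw [card_filter_powersetCard_subset A univ k (subset_univ A) hmk, card_univ]

theorem Nat.pow_mul_descFactorial_le {n k : ℕ} (hkn : k ≤ n) :
    ∀ m, n ^ m * k.descFactorial m ≤ k ^ m * n.descFactorial m
  | 0 => by simp
  | m + 1 => by
    have hstep : n * (k - m) ≤ k * (n - m) := by
      rw [Nat.mul_sub, Nat.mul_sub, mul_comm n k]
      exact Nat.sub_le_sub_left (Nat.mul_le_mul_right m hkn) _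
    calc n ^ (m + 1) * k.descFactorial (m + 1)
        = (n * (k - m)) * (n ^ m * k.descFactorial m) := by
          rw [Nat.descFactorial_succ]; ring
      _ ≤ (k * (n - m)) * (k ^ m * n.descFactorial m) :=
          Nat.mul_le_mul hstep (Nat.pow_mul_descFactorial_le hkn m)
      _ = k ^ (m + 1) * n.descFactorial (m + 1) := by
          rw [Nat.descFactorial_succ]; ring

theorem Nat.pow_mul_choose_le {n k : ℕ} (hkn : k ≤ n) (m : ℕ) :
    n ^ m * k.choose m ≤ k ^ m * n.choose m := by
  have h := Nat.pow_mul_descFactorial_le hkn m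
  rw [Nat.descFactorial_eq_factorial_mul_choose, Nat.descFactorial_eq_factorial_mul_choose,
    mul_left_comm, mul_left_comm (k ^ m)] at h
  exact Nat.le_of_mul_le_mul_left h m.factorial_pos

theorem div_eight_rpow_div_three {x : ℝ} (hx : 0 ≤ x) (t : ℝ) :
    (x / 8) ^ (t / 3) = (2:ℝ) ^ (-t) * x ^ (t / 3) := by
  have h8 : (8:ℝ) ^ (t / 3) = 2 ^ t := by
    rw [show (8:ℝ) = 2 ^ (3:ℝ) by norm_num, ← Real.rpow_mul (by norm_num)]
    ring_nf
  rw [Real.div_rpow hx (by norm_num), h8, Real.rpow_neg (by norm_num)]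
  ring

theorem choose_le_card_mul_choose_sq {α : Type*} [Fintype α] [DecidableEq α]
    {F : Finset (Finset α)} {k m : ℕ} (hF : ∀ S ∈ F, #S = k)
    (hmeet : ∀ T ∈ (univ : Finset α).powersetCard k, ∃ S ∈ F, m ≤ #(S ∩ T))
    (hmk : m ≤ k) (hk : k ≤ Fintype.card α) :
    (Fintype.card α).choose m ≤ #F * k.choose m ^ 2 := by
  set n := Fintype.card α
  have hcount : n.choose k ≤ #F * (k.choose m * (n - m).choose (k - m)) := by
    calc n.choose k = #((univ : Finset α).powersetCard k) := by simp [n]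
      _ ≤ #(F.biUnion fun S => {T ∈ (univ : Finset α).powersetCard k | m ≤ #(S ∩ T)}) :=
          card_le_card fun T hT => by
            obtain ⟨S, hS, hST⟩ := hmeet T hT
            exact mem_biUnion.2 ⟨S, hS, mem_filter.2 ⟨hT, hST⟩⟩
      _ ≤ _ := card_biUnion_le_card_mul _ _ _ fun S hS =>
          (card_filter_le_card_inter_le S hmk).trans_eq (by rw [hF S hS])
  refine Nat.le_of_mul_le_mul_right ?_ (Nat.choose_pos (by omega : k - m ≤ n - m))
  calc n.choose m * (n - m).choose (k - m) = n.choose k * k.choose m := (Nat.choose_mul hmk).symm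
    _ ≤ #F * (k.choose m * (n - m).choose (k - m)) * k.choose m := Nat.mul_le_mul_right _ hcount
    _ = #F * k.choose m ^ 2 * (n - m).choose (k - m) := by ring

theorem div_pow_le_mul_two_pow {n k m c : ℕ} (hk : 0 < k) (hkn : k ≤ n) (hmk : m ≤ k)
    (h : n.choose m ≤ c * k.choose m ^ 2) : ((n : ℝ) / k) ^ m ≤ c * 2 ^ k := by
  have hkm : (0 : ℝ) < k.choose m := by exact_mod_cast Nat.choose_pos hmk
  have hratio : ((n : ℝ) / k) ^ m * k.choose m ≤ n.choose m := by
    rw [div_pow, div_mul_eq_mul_div, div_le_iff₀ (by positivity)]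
    exact_mod_cast (Nat.pow_mul_choose_le hkn m).trans_eq (mul_comm _ _)
  have hc : ((n : ℝ) / k) ^ m ≤ c * k.choose m := by
    refine le_of_mul_le_mul_right ?_ hkm
    calc ((n : ℝ) / k) ^ m * k.choose m ≤ n.choose m := hratio
      _ ≤ c * k.choose m ^ 2 := by exact_mod_cast h
      _ = c * k.choose m * k.choose m := by ring
  calc ((n : ℝ) / k) ^ m ≤ c * k.choose m := hc
    _ ≤ c * 2 ^ k := by gcongr; exact_mod_cast Nat.choose_le_two_pow k m

/-- **Greedy packing of conjunctions.** For all `n ≥ k ≥ 1` there is a family `F` of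
`k`-element subsets of `{1,…,n}` with pairwise intersections of size at most `k/3` and
`|F| ≥ (n/(8k))^{k/3}`; moreover `(n/(8k))^{k/3} = 2^{-k}·(n/k)^{k/3}`. -/
theorem exists_packing_of_k_sets (n k : ℕ) (hk : 1 ≤ k) (hkn : k ≤ n) :
    ((n:ℝ) / (8 * (k:ℝ))) ^ ((k:ℝ)/3) =
      (2:ℝ) ^ (-(k:ℝ)) * ((n:ℝ) / (k:ℝ)) ^ ((k:ℝ)/3) ∧
    ∃ F : Finset (Finset (Fin n)),
      (∀ S ∈ F, S.card = k) ∧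
      (∀ S ∈ F, ∀ T ∈ F, S ≠ T → ((S ∩ T).card : ℝ) ≤ (k:ℝ)/3) ∧
      ((n:ℝ) / (8 * (k:ℝ))) ^ ((k:ℝ)/3) ≤ (F.card : ℝ) := by
  have heq : ((n:ℝ) / (8 * (k:ℝ))) ^ ((k:ℝ)/3) =
      (2:ℝ) ^ (-(k:ℝ)) * ((n:ℝ) / (k:ℝ)) ^ ((k:ℝ)/3) := by
    rw [mul_comm, ← div_div]
    exact div_eight_rpow_div_three (by positivity) k
  refine ⟨heq, ?_⟩
  obtain ⟨F, hFP, hF, hmeet⟩ := exists_pairwise_inter_le_forall_exists_lt_inter (Fin n)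
    (by omega : k / 3 < k)
  have hcard : ∀ S ∈ F, #S = k := fun S hS => (mem_powersetCard.1 (hFP hS)).2
  refine ⟨F, hcard, fun S hS T hT hST => ?_, ?_⟩
  · calc ((S ∩ T).card : ℝ) ≤ ((k / 3 : ℕ) : ℝ) := by exact_mod_cast hF hS hT hST
      _ ≤ (k : ℝ) / 3 := by exact_mod_cast Nat.cast_div_le
  have hchoose := choose_le_card_mul_choose_sq (m := k / 3 + 1) hcard hmeet (by omega)
    (by simpa using hkn)
  rw [Fintype.card_fin] at hchoose
  have hbound := div_pow_le_mul_two_pow hk hkn (by omega) hchoose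
  have hbase : (1 : ℝ) ≤ n / k := (one_le_div (by positivity)).2 (by exact_mod_cast hkn)
  have hexp : (k : ℝ) / 3 ≤ (k / 3 + 1 : ℕ) := by
    rw [div_le_iff₀ (by norm_num)]
    exact_mod_cast (by omega : k ≤ (k / 3 + 1) * 3)
  rw [heq]
  calc (2:ℝ) ^ (-(k:ℝ)) * ((n:ℝ) / k) ^ ((k:ℝ)/3)
    _ ≤ (2:ℝ) ^ (-(k:ℝ)) * ((n:ℝ) / k) ^ ((k / 3 + 1 : ℕ) : ℝ) :=
        mul_le_mul_of_nonneg_left (Real.rpow_le_rpow_of_exponent_le hbase hexp) (by positivity)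
    _ ≤ (2:ℝ) ^ (-(k:ℝ)) * (F.card * 2 ^ k) := by
        rw [Real.rpow_natCast]
        exact mul_le_mul_of_nonneg_left hbound (by positivity)
    _ = F.card := by
        rw [Real.rpow_neg (by norm_num), Real.rpow_natCast]
        field_simp
end
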